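/- Let (φ_n)_{n∈ℕ} be a depth-bounded fuzzy bisimulation between fuzzy automata A and A'. Then for every n ∈ ℕ, (x, x') ∈ A × A', and word u = s_1…s_k with k ≤ n: φ_n(x, x') ≤ ((δ^A_{s_1} ∘ … ∘ δ^A_{s_k} ∘ τ^A)(x) ⇔ (δ^{A'}_{s_1} ∘ … ∘ δ^{A'}_{s_k} ∘ τ^{A'})(x')). -/
import Mathlib


/-- A complete residuated lattice: a complete lattice where `⟨L, *, 1⟩` is a
commutative monoid with unit `1 = ⊤`, and the adjunction property holds. -/
class CompleteResiduatedLattice (L : Type*) extends CompleteLattice L, CommMonoid L where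
  rimp : L → L → L
  adjunction : ∀ x y z : L, x * y ≤ z ↔ x ≤ rimp y z
  one_eq_top : (1 : L) = ⊤

open CompleteResiduatedLattice

/-- A fuzzy automaton over alphabet `S` with state set `A`:
fuzzy transition function `δ`, fuzzy set of initial states `σ`,
fuzzy set of terminal states `τ`. -/
structure FuzzyAutomaton (L : Type*) [CompleteResiduatedLattice L] (S A : Type*) where
  δ : S → A → A → L
  σ : A → L
  τ : A → L

variable {L : Type*} [CompleteResiduatedLattice L]

/-- `(φ_n)_{n∈ℕ}` is a depth-bounded fuzzy simulation between `M` and `M'`: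
(1) the sequence is decreasing; (2) `φ₀⁻¹ ∘ τ ≤ τ'`;
(3) `φ_n⁻¹ ∘ δ_s ≤ δ'_s ∘ φ_{n-1}⁻¹` for `n ≥ 1`. -/
def IsDBFS {S A A' : Type*} (M : FuzzyAutomaton L S A) (M' : FuzzyAutomaton L S A')
    (φ : ℕ → A → A' → L) : Prop :=
  (∀ n x x', φ (n + 1) x x' ≤ φ n x x') ∧
  (∀ x', (⨆ x, φ 0 x x' * M.τ x) ≤ M'.τ x') ∧
  (∀ s n x' y, (⨆ x, φ (n + 1) x x' * M.δ s x y) ≤ ⨆ y', M'.δ s x' y' * φ n y y')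

/-- `(φ_n)_{n∈ℕ}` is a depth-bounded fuzzy bisimulation between `M` and `M'`:
it is a depth-bounded fuzzy simulation and additionally `φ₀ ∘ τ' ≤ τ` and
`φ_n ∘ δ'_s ≤ δ_s ∘ φ_{n-1}` for all `s` and `n ≥ 1`. -/
def IsDBFB {S A A' : Type*} (M : FuzzyAutomaton L S A) (M' : FuzzyAutomaton L S A')
    (φ : ℕ → A → A' → L) : Prop :=
  IsDBFS M M' φ ∧
  (∀ x, (⨆ x', φ 0 x x' * M'.τ x') ≤ M.τ x) ∧
  (∀ s n x y', (⨆ x', φ (n + 1) x x' * M'.δ s x' y') ≤ ⨆ y, M.δ s x y * φ n y y')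

/-- The degree `(δ_{s₁} ∘ … ∘ δ_{s_k} ∘ τ)(x)` in which the automaton `M`
started at state `x` accepts the word `s₁…s_k`. -/
def accept {S A : Type*} (M : FuzzyAutomaton L S A) : List S → A → L
  | [], x => M.τ x
  | s :: w, x => ⨆ y, M.δ s x y * accept M w y

/-- The biresiduum `a ⇔ b = (a ⇒ b) ∧ (b ⇒ a)`. -/
def birimp (a b : L) : L := rimp a b ⊓ rimp b a

section Aux
variable {L : Type*} [CompleteResiduatedLattice L]

private lemma crl_mul_le_mul_left (a : L) {b c : L} (h : b ≤ c) : a * b ≤ a * c := by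
  rw [mul_comm a b, adjunction]
  exact h.trans ((adjunction c a (a * c)).mp (le_of_eq (mul_comm c a)))

private lemma crl_mul_le_mul_right (a : L) {b c : L} (h : b ≤ c) : b * a ≤ c * a := by
  rw [mul_comm b a, mul_comm c a]; exact crl_mul_le_mul_left a h

private lemma crl_iSup_mul_le {ι : Sort*} {f : ι → L} {a z : L} :
    (⨆ i, f i) * a ≤ z ↔ ∀ i, f i * a ≤ z := by
  rw [adjunction, iSup_le_iff]
  exact forall_congr' fun i => (adjunction (f i) a z).symm

private lemma crl_mul_iSup {ι : Sort*} (a : L) (f : ι → L) :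
    a * (⨆ i, f i) = ⨆ i, a * f i := by
  apply le_antisymm
  · rw [mul_comm]
    exact crl_iSup_mul_le.mpr fun i => le_of_eq_of_le (mul_comm _ _) (le_iSup (fun i => a * f i) i)
  · exact iSup_le fun i => crl_mul_le_mul_left a (le_iSup f i)

private lemma crl_iSup_mul {ι : Sort*} (a : L) (f : ι → L) :
    (⨆ i, f i) * a = ⨆ i, f i * a := by
  rw [mul_comm, crl_mul_iSup]
  exact iSup_congr fun i => mul_comm _ _

private lemma phi_anti {S A A' : Type*} {M : FuzzyAutomaton L S A} {M' : FuzzyAutomaton L S A'}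
    {φ : ℕ → A → A' → L} (hφ : IsDBFB M M' φ) {m n : ℕ} (h : m ≤ n) (x : A) (x' : A') :
    φ n x x' ≤ φ m x x' := by
  induction n with
  | zero => simp_all
  | succ k ih =>
    rcases Nat.lt_or_ge m (k+1) with h' | h'
    · exact (hφ.1.1 k x x').trans (ih (Nat.lt_succ_iff.mp h'))
    · have : m = k + 1 := le_antisymm h h'
      subst this; exact le_rfl

private lemma key {S A A' : Type*} {M : FuzzyAutomaton L S A} {M' : FuzzyAutomaton L S A'}
    {φ : ℕ → A → A' → L} (hφ : IsDBFB M M' φ) (u : List S) :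
    ∀ (x : A) (x' : A'),
      φ u.length x x' * accept M u x ≤ accept M' u x' ∧
      φ u.length x x' * accept M' u x' ≤ accept M u x := by
  induction u with
  | nil =>
    intro x x'
    constructor
    · exact le_trans (le_iSup (fun x => φ 0 x x' * M.τ x) x) (hφ.1.2.1 x')
    · exact le_trans (le_iSup (fun x' => φ 0 x x' * M'.τ x') x') (hφ.2.1 x)
  | cons s w ih =>
    intro x x'
    constructor
    · show φ (w.length + 1) x x' * (⨆ y, M.δ s x y * accept M w y) ≤ _
      rw [crl_mul_iSup]
      apply iSup_le; intro y
      calc φ (w.length + 1) x x' * (M.δ s x y * accept M w y)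
          = (φ (w.length + 1) x x' * M.δ s x y) * accept M w y := (mul_assoc _ _ _).symm
        _ ≤ (⨆ y', M'.δ s x' y' * φ w.length y y') * accept M w y := by
            apply crl_mul_le_mul_right
            exact le_trans (le_iSup (fun x => φ (w.length + 1) x x' * M.δ s x y) x)
              (hφ.1.2.2 s w.length x' y)
        _ = ⨆ y', (M'.δ s x' y' * φ w.length y y') * accept M w y := crl_iSup_mul _ _
        _ ≤ ⨆ y', M'.δ s x' y' * accept M' w y' := by
            apply iSup_mono; intro y'
            rw [mul_assoc]
            exact crl_mul_le_mul_left _ (ih y y').1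
    · show φ (w.length + 1) x x' * (⨆ y', M'.δ s x' y' * accept M' w y') ≤ _
      rw [crl_mul_iSup]
      apply iSup_le; intro y'
      calc φ (w.length + 1) x x' * (M'.δ s x' y' * accept M' w y')
          = (φ (w.length + 1) x x' * M'.δ s x' y') * accept M' w y' := (mul_assoc _ _ _).symm
        _ ≤ (⨆ y, M.δ s x y * φ w.length y y') * accept M' w y' := by
            apply crl_mul_le_mul_right
            exact le_trans (le_iSup (fun x' => φ (w.length + 1) x x' * M'.δ s x' y') x')
              (hφ.2.2 s w.length x y')
        _ = ⨆ y, (M.δ s x y * φ w.length y y') * accept M' w y' := crl_iSup_mul _ _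
        _ ≤ ⨆ y, M.δ s x y * accept M w y := by
            apply iSup_mono; intro y
            rw [mul_assoc]
            exact crl_mul_le_mul_left _ (ih y y').2

end Aux

theorem stmt14 {S A A' : Type*} [Nonempty A] [Nonempty A']
    (M : FuzzyAutomaton L S A) (M' : FuzzyAutomaton L S A')
    (φ : ℕ → A → A' → L) (hφ : IsDBFB M M' φ)
    (n : ℕ) (x : A) (x' : A') (u : List S) (hu : u.length ≤ n) :
    φ n x x' ≤ birimp (accept M u x) (accept M' u x') := by
  apply le_inf
  · rw [← adjunction]
    exact le_trans (crl_mul_le_mul_right _ (phi_anti hφ hu x x')) (key hφ u x x').1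
  · rw [← adjunction]
    exact le_trans (crl_mul_le_mul_right _ (phi_anti hφ hu x x')) (key hφ u x x').2
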